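/- Let A ∈ ℝ^{n×n}, B ∈ ℝ^{n×k}, and let V ⊆ ℝ^n be a subspace. Then there exists F ∈ ℝ^{k×n} with (A + BF)V ⊆ V if and only if A V ⊆ V + Im B. -/
import Mathlib


open Matrix

/-- `Ker C = { x : Cx = 0 }` as a subspace of `ℝ^n`. -/
noncomputable def kerMat {m n : ℕ} (C : Matrix (Fin m) (Fin n) ℝ) :
    Submodule ℝ (Fin n → ℝ) :=
  LinearMap.ker C.mulVecLin

/-- `Im B = { Bu : u ∈ ℝ^k }` as a subspace of `ℝ^n`. -/
noncomputable def imMat {n k : ℕ} (B : Matrix (Fin n) (Fin k) ℝ) :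
    Submodule ℝ (Fin n → ℝ) :=
  LinearMap.range B.mulVecLin

/-- (Feedback characterization of (A,B)-invariance.) A subspace
`V ⊆ ℝ^n` admits a friend `F` with `(A + BF)V ⊆ V` iff `A V ⊆ V + Im B`. -/
theorem stmt8 (n k : ℕ) (A : Matrix (Fin n) (Fin n) ℝ)
    (B : Matrix (Fin n) (Fin k) ℝ) (V : Submodule ℝ (Fin n → ℝ)) :
    (∃ F : Matrix (Fin k) (Fin n) ℝ,
        Submodule.map (A + B * F).mulVecLin V ≤ V) ↔
      Submodule.map A.mulVecLin V ≤ V ⊔ imMat B := by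
  constructor
  · rintro ⟨F, hF⟩ x ⟨v, hv, rfl⟩
    have h1 : (A + B * F).mulVec v ∈ V := hF ⟨v, hv, rfl⟩
    have key : A.mulVecLin v = (A + B * F).mulVec v + B.mulVec (-(F.mulVec v)) := by
      simp [Matrix.add_mulVec, Matrix.mulVec_mulVec, Matrix.mulVec_neg]
    rw [key]
    exact Submodule.add_mem_sup h1 ⟨-(F.mulVec v), rfl⟩
  · intro h
    -- N := V ⊔ im B, T : V × ℝ^k → N surjective, S : V → N, lift S along T
    set N := V ⊔ imMat B with hN
    let T : (V × (Fin k → ℝ)) →ₗ[ℝ] (Fin n → ℝ) :=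
      (V.subtype.comp (LinearMap.fst ℝ _ _)) + (B.mulVecLin.comp (LinearMap.snd ℝ _ _))
    have hTrange : LinearMap.range T = N := by
      apply le_antisymm
      · rintro _ ⟨⟨w, u⟩, rfl⟩
        exact Submodule.add_mem_sup w.2 ⟨u, rfl⟩
      · rw [hN]
        apply sup_le
        · intro x hx; exact ⟨(⟨x, hx⟩, 0), by simp [T]⟩
        · rintro _ ⟨u, rfl⟩; exact ⟨(0, u), by simp [T]⟩
    let T' : (V × (Fin k → ℝ)) →ₗ[ℝ] N := T.codRestrict N (fun x => hTrange ▸ ⟨x, rfl⟩)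
    have hT'surj : Function.Surjective T' := by
      rintro ⟨y, hy⟩
      obtain ⟨x, hx⟩ : y ∈ LinearMap.range T := hTrange ▸ hy
      exact ⟨x, Subtype.ext hx⟩
    let S : V →ₗ[ℝ] N :=
      (A.mulVecLin.comp V.subtype).codRestrict N
        (fun v => h ⟨v, v.2, rfl⟩)
    obtain ⟨L, hL⟩ := Module.projective_lifting_property T' S hT'surj
    -- f0 : V → ℝ^k, extend to all of ℝ^n
    let f0 : V →ₗ[ℝ] (Fin k → ℝ) := -((LinearMap.snd ℝ _ _).comp L)
    obtain ⟨g, hg⟩ := LinearMap.exists_extend f0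
    refine ⟨LinearMap.toMatrix' g, ?_⟩
    rintro _ ⟨v, hv, rfl⟩
    have hgv : g v = f0 ⟨v, hv⟩ := by
      have := congrFun (congrArg (fun m => m.toFun) hg) ⟨v, hv⟩
      simpa using this
    have hTL : T (L ⟨v, hv⟩) = A.mulVec v := by
      have := congrArg (fun m => (m ⟨v, hv⟩ : Fin n → ℝ)) hL
      simpa [T', S] using this
    have hgm : (LinearMap.toMatrix' g).mulVec v = g v := by
      rw [← Matrix.toLin'_apply, Matrix.toLin'_toMatrix']
    have hexp : (A + B * LinearMap.toMatrix' g).mulVecLin v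
        = A.mulVec v + B.mulVec (g v) := by
      simp [Matrix.add_mulVec, ← Matrix.mulVec_mulVec, hgm]
    have hTLexp : T (L ⟨v, hv⟩) = ↑(L ⟨v, hv⟩).1 + B.mulVec (L ⟨v, hv⟩).2 := rfl
    have hfin : A.mulVec v + B.mulVec (g v) = ↑(L ⟨v, hv⟩).1 := by
      rw [hgv]
      have : (f0 ⟨v, hv⟩ : Fin k → ℝ) = -(L ⟨v, hv⟩).2 := rfl
      rw [this, ← hTL, hTLexp, Matrix.mulVec_neg]
      abel
    rw [hexp, hfin]
    exact (L ⟨v, hv⟩).1.2
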